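/- Let $L \subseteq W$ be a null line with $\rho L \cap L^\perp = \{0\}$ and let $\alpha \in \mathbb{C} \setminus \{0\}$. Let $U \subseteq \mathbb{C}$ be an open set with $-U = U$ and $\alpha, -\alpha \in U$, and let $F : U \to \mathrm{End}(W)$ be holomorphic such that each $F(\lambda)$ is skew-adjoint (i.e. $(F(\lambda)x, y) = -(x, F(\lambda)y)$ for all $x,y$), $\rho \circ F(\lambda) \circ \rho = F(-\lambda)$ for all $\lambda \in U$, and $F(\alpha)L \subseteq L$. Then the map $\lambda \mapsto p_{\alpha,L}(\lambda) \circ F(\lambda) \circ p_{\alpha,L}(\lambda)^{-1}$, defined on $U \setminus \{\alpha, -\alpha\}$, extends to a holomorphic map $U \to \mathrm{End}(W)$. -/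

import Mathlib

/-!
Put `f = ρ e` for a generator `e` of `L`; then `(e, f)` is a hyperbolic pair and
`W = ℂe ⊕ M ⊕ ℂf` with `M = {e, f}^⊥`. In this grading `p(λ) = diag(a, 1, a⁻¹)` with
`a = (α - λ)/(α + λ)`, so conjugation multiplies the block of `F(λ)` from the `j`-th to the
`i`-th summand by `a_i / a_j`. The blocks `ℂf → ℂe` and `ℂe → ℂf` (scaled by `a^{±2}`) vanish
because `F(λ)` is skew and `e`, `f` are null. The blocks `ℂe → M → ℂf` are scaled by
`a⁻¹`, which has a pole at `α`, but they vanish at `λ = α`: `F(α)` preserves `ℂe`, hence by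
skewness also `e^⊥ ⊇ M`. Symmetrically `F(-α) = ρF(α)ρ` preserves `ℂf`, which kills the blocks
scaled by `a` at `-α`. Division of a holomorphic function by `λ ∓ α` at one of its zeros is
holomorphic (`dslope`).
-/

/-- `ActsAsL B ρ L a b T`: the continuous endomorphism `T` acts as multiplication by `a`
on `L`, as the identity on `(L ⊕ ρL)^⊥`, and as multiplication by `b` on `ρL`. This is
the defining property of `p_{α,L}(λ)`. -/
def ActsAsL {W : Type*} [NormedAddCommGroup W] [NormedSpace ℂ W]
    (B : LinearMap.BilinForm ℂ W) (ρ : W →L[ℂ] W) (L : Submodule ℂ W)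
    (a b : ℂ) (T : W →L[ℂ] W) : Prop :=
  (∀ x ∈ L, T x = a • x) ∧
  (∀ x ∈ B.orthogonal (L ⊔ Submodule.map (ρ : W →ₗ[ℂ] W) L), T x = x) ∧
  (∀ x ∈ Submodule.map (ρ : W →ₗ[ℂ] W) L, T x = b • x)

open Submodule

theorem exists_differentiableOn_div_sub_smul {E : Type*} [NormedAddCommGroup E]
    [NormedSpace ℂ E] [CompleteSpace E] {U : Set ℂ} (hU : IsOpen U) {g : ℂ → ℂ} {H : ℂ → E}
    (hg : DifferentiableOn ℂ g U) (hH : DifferentiableOn ℂ H U) {z₀ : ℂ} (hz₀ : z₀ ∈ U)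
    (hH₀ : H z₀ = 0) :
    ∃ G : ℂ → E, DifferentiableOn ℂ G U ∧ ∀ z ≠ z₀, G z = (g z / (z - z₀)) • H z := by
  refine ⟨fun z => g z • dslope H z₀ z,
    hg.smul ((Complex.differentiableOn_dslope (hU.mem_nhds hz₀)).2 hH), fun z hz => ?_⟩
  simp only
  rw [dslope_of_ne _ hz, slope_def_module, hH₀, sub_zero, smul_smul, div_eq_mul_inv]

theorem LinearMap.BilinForm.apply_self_eq_zero_of_skew {M : Type*} [AddCommGroup M] [Module ℂ M]
    {B : LinearMap.BilinForm ℂ M} (hB : ∀ x y, B x y = B y x) {X : M → M}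
    (hX : ∀ x y, B (X x) y = - B x (X y)) (x : M) : B (X x) x = 0 := by
  have := hX x x
  rw [hB x] at this
  linear_combination this / 2

theorem LinearMap.BilinForm.apply_ne_zero_of_inf_orthogonal_eq_bot {M : Type*} [AddCommGroup M]
    [Module ℂ M] {B : LinearMap.BilinForm ℂ M} {N : Submodule ℂ M} {e w : M}
    (hN : N ⊓ B.orthogonal (ℂ ∙ e) = ⊥) (hw : w ∈ N) (hw0 : w ≠ 0) : B e w ≠ 0 := by
  intro h
  have : w ∈ N ⊓ B.orthogonal (ℂ ∙ e) := ⟨hw, by simpa [orthogonal_span_singleton_eq_toLin_ker]⟩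
  exact hw0 (by simpa [hN] using this)

noncomputable section

namespace LinearMap.BilinForm

variable {W : Type*} [NormedAddCommGroup W] [NormedSpace ℂ W] [FiniteDimensional ℂ W]
  (B : LinearMap.BilinForm ℂ W) (e f : W)

/-- For `B e f ≠ 0`, the projection `x ↦ (B x f / B e f) • e` onto `ℂ ∙ e` with kernel the
left orthogonal of `f`. -/
def lineProj : W →L[ℂ] W :=
  LinearMap.toContinuousLinearMap (((B e f)⁻¹ • B.flip f).smulRight e)

def lineProjCompl : W →L[ℂ] W := 1 - lineProj B e f - lineProj B f e

def hyperbolicScaling (a : ℂ) : W →L[ℂ] W :=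
  a • lineProj B e f + lineProjCompl B e f + a⁻¹ • lineProj B f e

def diagPart (X : W →L[ℂ] W) : W →L[ℂ] W :=
  lineProj B e f * X * lineProj B e f + lineProjCompl B e f * X * lineProjCompl B e f +
    lineProj B f e * X * lineProj B f e

/-- The blocks `ℂ ∙ e → M` and `M → ℂ ∙ f` of `X`, where `M` is the range of `lineProjCompl`. -/
def lowerPart (X : W →L[ℂ] W) : W →L[ℂ] W :=
  lineProjCompl B e f * X * lineProj B e f + lineProj B f e * X * lineProjCompl B e f

theorem lineProj_add_lineProjCompl_add_lineProj :
    lineProj B e f + lineProjCompl B e f + lineProj B f e = 1 := by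
  rw [lineProjCompl]
  abel

variable {B e f}

theorem lineProj_apply (x : W) : lineProj B e f x = (B x f / B e f) • e := by
  simp [lineProj, div_eq_inv_mul]

theorem lineProj_apply_mem (x : W) : lineProj B e f x ∈ ℂ ∙ e :=
  mem_span_singleton.2 ⟨_, (lineProj_apply x).symm⟩

theorem lineProj_mul_mul_lineProj {T : W →L[ℂ] W} (hT : B (T f) f = 0) :
    lineProj B e f * T * lineProj B f e = 0 := by
  ext x
  simp [lineProj_apply, hT]

theorem lineProj_mul_lineProj (hf : B f f = 0) : lineProj B e f * lineProj B f e = 0 := by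
  simpa using lineProj_mul_mul_lineProj (B := B) (e := e) (T := 1) hf

theorem lineProj_mul_self (hef : B e f ≠ 0) : lineProj B e f * lineProj B e f = lineProj B e f := by
  ext x
  simp [lineProj_apply, hef]

theorem lineProjCompl_comm : lineProjCompl B f e = lineProjCompl B e f :=
  sub_right_comm _ _ _

theorem lineProjCompl_apply_left (he : B e e = 0) (hfe : B f e ≠ 0) (x : W) :
    B (lineProjCompl B e f x) e = 0 := by
  simp [lineProjCompl, lineProj_apply, he, hfe]

theorem lineProjCompl_apply_self (he : B e e = 0) (hef : B e f ≠ 0) :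
    lineProjCompl B e f e = 0 := by
  simp [lineProjCompl, lineProj_apply, he, hef]

theorem lineProjCompl_apply_right (hf : B f f = 0) (hef : B e f ≠ 0) (x : W) :
    B (lineProjCompl B e f x) f = 0 := by
  rw [← lineProjCompl_comm, lineProjCompl_apply_left hf hef]

theorem lineProjCompl_apply_mem_orthogonal (hB : ∀ x y, B x y = B y x) (he : B e e = 0)
    (hf : B f f = 0) (hef : B e f ≠ 0) (x : W) :
    lineProjCompl B e f x ∈ B.orthogonal ((ℂ ∙ e) ⊔ (ℂ ∙ f)) := by
  intro n hn
  obtain ⟨y, hy, z, hz, rfl⟩ := mem_sup.1 hn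
  obtain ⟨s, rfl⟩ := mem_span_singleton.1 hy
  obtain ⟨t, rfl⟩ := mem_span_singleton.1 hz
  have hfe : B f e ≠ 0 := hB e f ▸ hef
  simp [hB _ (lineProjCompl B e f x), lineProjCompl_apply_left he hfe,
    lineProjCompl_apply_right hf hef]

theorem hyperbolicScaling_inv_mul (hB : ∀ x y, B x y = B y x) (he : B e e = 0)
    (hf : B f f = 0) (hef : B e f ≠ 0) {a : ℂ} (ha : a ≠ 0) :
    hyperbolicScaling B e f a⁻¹ * hyperbolicScaling B e f a = 1 := by
  have hfe : B f e ≠ 0 := hB e f ▸ hef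
  have hpp := lineProj_mul_self hef
  have hqq := lineProj_mul_self hfe
  have hpq := lineProj_mul_lineProj (B := B) (e := e) hf
  have hqp := lineProj_mul_lineProj (B := B) (e := f) he
  simp only [hyperbolicScaling, lineProjCompl, inv_inv, mul_add, add_mul, mul_sub, sub_mul,
    smul_mul_assoc, mul_smul_comm, one_mul, mul_one, hpp, hqq, hpq, hqp, smul_zero]
  match_scalars <;> field_simp <;> ring

theorem lowerPart_swap (X : W →L[ℂ] W) :
    lowerPart B f e X =
      lineProj B e f * X * lineProjCompl B e f + lineProjCompl B e f * X * lineProj B f e := by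
  rw [lowerPart, lineProjCompl_comm, add_comm]

theorem hyperbolicScaling_mul_mul_hyperbolicScaling_inv (hB : ∀ x y, B x y = B y x)
    {X : W →L[ℂ] W} (hX : ∀ x y, B (X x) y = - B x (X y)) {a : ℂ} (ha : a ≠ 0) :
    hyperbolicScaling B e f a * X * hyperbolicScaling B e f a⁻¹ =
      diagPart B e f X + a⁻¹ • lowerPart B e f X + a • lowerPart B f e X := by
  have hpq := lineProj_mul_mul_lineProj (B := B) (e := e) (apply_self_eq_zero_of_skew hB hX f)
  have hqp := lineProj_mul_mul_lineProj (B := B) (e := f) (apply_self_eq_zero_of_skew hB hX e)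
  rw [lowerPart_swap (e := e)]
  simp only [hyperbolicScaling, diagPart, lowerPart, inv_inv, mul_add, add_mul, smul_mul_assoc,
    mul_smul_comm, hpq, hqp, smul_zero, add_zero]
  match_scalars <;> field_simp

theorem lowerPart_eq_zero (hB : ∀ x y, B x y = B y x) (he : B e e = 0) (hef : B e f ≠ 0)
    {X : W →L[ℂ] W} (hX : ∀ x y, B (X x) y = - B x (X y)) {s : ℂ} (hXe : X e = s • e) :
    lowerPart B e f X = 0 := by
  have hfe : B f e ≠ 0 := hB e f ▸ hef
  ext x
  simp [lowerPart, lineProj_apply, hXe, hX _ e, lineProjCompl_apply_left he hfe,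
    lineProjCompl_apply_self he hef]

theorem exists_differentiableOn_hyperbolicScaling_conj (hB : ∀ x y, B x y = B y x)
    (he : B e e = 0) (hf : B f f = 0) (hef : B e f ≠ 0) {U : Set ℂ} (hU : IsOpen U) {α : ℂ}
    (hαU : α ∈ U) (hαU' : -α ∈ U) {F : ℂ → W →L[ℂ] W} (hF : DifferentiableOn ℂ F U)
    (hFsk : ∀ z ∈ U, ∀ x y, B (F z x) y = - B x (F z y)) {s t : ℂ} (hFe : F α e = s • e)
    (hFf : F (-α) f = t • f) :
    ∃ G : ℂ → W →L[ℂ] W, DifferentiableOn ℂ G U ∧ ∀ z ∈ U, z ≠ α → z ≠ -α →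
      G z = hyperbolicScaling B e f ((α - z) / (α + z)) * F z *
        hyperbolicScaling B e f ((α + z) / (α - z)) := by
  have hfe : B f e ≠ 0 := hB e f ▸ hef
  obtain ⟨G₁, hG₁, hG₁_eq⟩ := exists_differentiableOn_div_sub_smul hU (g := fun z => -(α + z))
    (H := fun z => lowerPart B e f (F z)) (by fun_prop) (by unfold lowerPart; fun_prop) hαU
    (lowerPart_eq_zero hB he hef (hFsk α hαU) hFe)
  obtain ⟨G₂, hG₂, hG₂_eq⟩ := exists_differentiableOn_div_sub_smul hU (g := fun z => α - z)
    (H := fun z => lowerPart B f e (F z)) (by fun_prop) (by unfold lowerPart; fun_prop) hαU'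
    (lowerPart_eq_zero hB hf hfe (hFsk (-α) hαU') hFf)
  refine ⟨fun z => diagPart B e f (F z) + G₁ z + G₂ z,
    ((by unfold diagPart; fun_prop : DifferentiableOn ℂ _ U).add hG₁).add hG₂,
    fun z hz hzα hzα' => ?_⟩
  have h₁ : α - z ≠ 0 := sub_ne_zero.2 hzα.symm
  have h₂ : α + z ≠ 0 := fun h => hzα' (eq_neg_of_add_eq_zero_right h)
  dsimp only
  rw [← inv_div (α - z), hyperbolicScaling_mul_mul_hyperbolicScaling_inv hB (hFsk z hz)
    (div_ne_zero h₁ h₂), hG₁_eq z hzα, hG₂_eq z hzα', inv_div]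
  congr 3 <;> field_simp <;> ring

end LinearMap.BilinForm

end

open LinearMap.BilinForm

theorem ActsAsL.eq_hyperbolicScaling {W : Type*} [NormedAddCommGroup W] [NormedSpace ℂ W]
    [FiniteDimensional ℂ W] {B : LinearMap.BilinForm ℂ W} (hB : ∀ x y, B x y = B y x)
    {ρ : W →L[ℂ] W} {L : Submodule ℂ W} {e f : W} (he : B e e = 0) (hf : B f f = 0)
    (hef : B e f ≠ 0) (hL : L = ℂ ∙ e) (hL' : L.map (ρ : W →ₗ[ℂ] W) = ℂ ∙ f) {a : ℂ}
    {T : W →L[ℂ] W} (hT : ActsAsL B ρ L a a⁻¹ T) : T = hyperbolicScaling B e f a := by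
  obtain ⟨hTL, hTM, hTL'⟩ := hT
  ext x
  have hx : lineProj B e f x + lineProjCompl B e f x + lineProj B f e x = x := by
    simpa using congr($(lineProj_add_lineProjCompl_add_lineProj B e f) x)
  conv_lhs => rw [← hx]
  rw [map_add, map_add,
    hTL _ (hL ▸ lineProj_apply_mem x), hTL' (lineProj B f e x) (hL' ▸ lineProj_apply_mem x),
    hTM _ (by rw [hL', hL]; exact lineProjCompl_apply_mem_orthogonal hB he hf hef x)]
  simp [hyperbolicScaling]

theorem stmt10_general {W : Type*} [NormedAddCommGroup W] [NormedSpace ℂ W] [FiniteDimensional ℂ W]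
    (B : LinearMap.BilinForm ℂ W) (hB : ∀ x y, B x y = B y x)
    (ρ : W →L[ℂ] W) (hρ2 : ∀ x, ρ (ρ x) = x) (hρB : ∀ x y, B (ρ x) (ρ y) = B x y)
    (L : Submodule ℂ W) (hL1 : Module.finrank ℂ L = 1) (hLnull : ∀ l ∈ L, B l l = 0)
    (hLρ : Submodule.map (ρ : W →ₗ[ℂ] W) L ⊓ B.orthogonal L = ⊥)
    (α : ℂ)
    (U : Set ℂ) (hUo : IsOpen U) (hαU : α ∈ U) (hαU' : -α ∈ U)
    (F : ℂ → W →L[ℂ] W) (hF : DifferentiableOn ℂ F U)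
    (hFsk : ∀ lam ∈ U, ∀ x y, B (F lam x) y = - B x (F lam y))
    (hFtw : ∀ lam ∈ U, ∀ x, ρ (F lam (ρ x)) = F (-lam) x)
    (hFα : ∀ x ∈ L, F α x ∈ L)
    (P P' : ℂ → W →L[ℂ] W)
    (hP : ∀ lam, lam ≠ α → lam ≠ -α →
      ActsAsL B ρ L ((α - lam) / (α + lam)) ((α + lam) / (α - lam)) (P lam))
    (hP' : ∀ lam, lam ≠ α → lam ≠ -α → P lam * P' lam = 1 ∧ P' lam * P lam = 1) :
    ∃ G : ℂ → W →L[ℂ] W, DifferentiableOn ℂ G U ∧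
      ∀ lam ∈ U, lam ≠ α → lam ≠ -α → G lam = P lam * F lam * P' lam := by
  obtain ⟨e, heL, he0⟩ := exists_mem_ne_zero_of_ne_bot (p := L) fun h => by
    subst h; simp at hL1
  have hL : L = ℂ ∙ e := eq_span_singleton_of_mem_of_finrank_eq_one hL1 heL he0
  have hL' : L.map (ρ : W →ₗ[ℂ] W) = ℂ ∙ ρ e := by rw [hL, map_span, Set.image_singleton]; rfl
  have hee : B e e = 0 := hLnull e heL
  have hff : B (ρ e) (ρ e) = 0 := (hρB e e).trans hee
  have hef : B e (ρ e) ≠ 0 := apply_ne_zero_of_inf_orthogonal_eq_bot (N := L.map ρ)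
    (by rwa [← hL]) (mem_map_of_mem heL) fun h => he0 (by rw [← hρ2 e, h, map_zero])
  obtain ⟨s, hs⟩ := mem_span_singleton.1 (hL ▸ hFα e heL)
  have hFf : F (-α) (ρ e) = s • ρ e := by rw [← hFtw α hαU, hρ2, ← hs, map_smul]
  obtain ⟨G, hG, hG_eq⟩ := exists_differentiableOn_hyperbolicScaling_conj hB hee hff hef hUo hαU
    hαU' hF hFsk hs.symm hFf
  refine ⟨G, hG, fun z hz hzα hzα' => ?_⟩
  have hPz := (inv_div (α - z) (α + z) ▸ hP z hzα hzα').eq_hyperbolicScaling hB hee hff hef hL hL'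
  have ha : (α - z) / (α + z) ≠ 0 :=
    div_ne_zero (sub_ne_zero.2 hzα.symm) fun h => hzα' (eq_neg_of_add_eq_zero_right h)
  have hP'z : P' z = hyperbolicScaling B e (ρ e) ((α + z) / (α - z)) := by
    rw [← inv_div (α - z)]
    refine (left_inv_eq_right_inv (hyperbolicScaling_inv_mul hB hee hff hef ha) ?_).symm
    rw [← hPz]; exact (hP' z hzα hzα').1
  rw [hG_eq z hz hzα hzα', hPz, hP'z]

/-- If `F` is holomorphic on a symmetric open set `U ∋ ±α` with values in skew-adjoint
endomorphisms, `ρ ∘ F(λ) ∘ ρ = F(-λ)`, and `F(α) L ⊆ L`, then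
`λ ↦ p_{α,L}(λ) ∘ F(λ) ∘ p_{α,L}(λ)⁻¹` extends holomorphically to all of `U`. -/
theorem stmt10 {W : Type*} [NormedAddCommGroup W] [NormedSpace ℂ W] [FiniteDimensional ℂ W]
    (B : LinearMap.BilinForm ℂ W) (hB : ∀ x y, B x y = B y x) (hBnd : B.Nondegenerate)
    (ρ : W →L[ℂ] W) (hρ2 : ∀ x, ρ (ρ x) = x) (hρB : ∀ x y, B (ρ x) (ρ y) = B x y)
    (L : Submodule ℂ W) (hL1 : Module.finrank ℂ L = 1) (hLnull : ∀ l ∈ L, B l l = 0)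
    (hLρ : Submodule.map (ρ : W →ₗ[ℂ] W) L ⊓ B.orthogonal L = ⊥)
    (α : ℂ) (hα : α ≠ 0)
    (U : Set ℂ) (hUo : IsOpen U) (hUsym : ∀ z ∈ U, -z ∈ U) (hαU : α ∈ U) (hαU' : -α ∈ U)
    (F : ℂ → W →L[ℂ] W) (hF : DifferentiableOn ℂ F U)
    (hFsk : ∀ lam ∈ U, ∀ x y, B (F lam x) y = - B x (F lam y))
    (hFtw : ∀ lam ∈ U, ∀ x, ρ (F lam (ρ x)) = F (-lam) x)
    (hFα : ∀ x ∈ L, F α x ∈ L)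
    (P P' : ℂ → W →L[ℂ] W)
    (hP : ∀ lam, lam ≠ α → lam ≠ -α →
      ActsAsL B ρ L ((α - lam) / (α + lam)) ((α + lam) / (α - lam)) (P lam))
    (hP' : ∀ lam, lam ≠ α → lam ≠ -α → P lam * P' lam = 1 ∧ P' lam * P lam = 1) :
    ∃ G : ℂ → W →L[ℂ] W, DifferentiableOn ℂ G U ∧
      ∀ lam ∈ U, lam ≠ α → lam ≠ -α → G lam = P lam * F lam * P' lam :=
  stmt10_general B hB ρ hρ2 hρB L hL1 hLnull hLρ α U hUo hαU hαU' F hF hFsk hFtw hFα P P' hP hP'
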